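/- The generating function identity Σ_{p≥0} Z(p+1)·x^p = 1/2 + ((1-12x)^{3/2} - 1)/(24√3·x) holds for x ∈ (0, 1/12]. -/

import Mathlib

/-!
Up to its constant term, `Z (p + 1)` equals `Ring.choose (3/2) (p + 1) * (-12) ^ (p + 1) / (24√3)`,
so the series is the binomial series of `(1 - 12x) ^ (3/2)` with its first term removed, rescaled.
For `12x < 1` this is Newton's binomial theorem. At the endpoint `12x = 1` the terms
`Ring.choose (3/2) n * (-1) ^ n` are nonnegative for `n ≥ 2`, and by Pascal's rule their sum over
`n ≤ N` telescopes to `Ring.choose (1/2) N * (-1) ^ N`, which tends to `0 = (1 - 1) ^ (3/2)`.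
-/

/-- `Z(1) = (2-√3)/4` and `Z(p) = 6^p·(2p-5)!!/(8√3·p!)` for `p ≥ 2`. -/
noncomputable def Zfun : ℕ → ℝ := fun p =>
  if p = 1 then (2 - Real.sqrt 3) / 4
  else 6 ^ p * Nat.doubleFactorial (2 * p - 5) / (8 * Real.sqrt 3 * Nat.factorial p)

open Finset Filter Topology Nat

theorem Ring.choose_succ_right_eq {K : Type*} [Field K] [CharZero K] (a : K) (n : ℕ) :
    Ring.choose a (n + 1) * (n + 1) = Ring.choose a n * (a - n) := by
  have h : ((n + 1)! : K) ≠ 0 := by exact_mod_cast Nat.factorial_ne_zero _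
  simp only [Ring.choose_eq_smul, descPochhammer_succ_right, Polynomial.smeval_mul,
    Polynomial.smeval_sub, Polynomial.smeval_X, Polynomial.smeval_natCast, pow_zero, pow_one,
    nsmul_eq_mul, mul_one, smul_eq_mul, Nat.factorial_succ, Nat.cast_mul, Nat.cast_succ]
  field_simp

theorem Ring.sum_range_succ_choose_mul_neg_one_pow {R : Type*} [CommRing R] [BinomialRing R]
    (a : R) (N : ℕ) :
    ∑ n ∈ range (N + 1), Ring.choose a n * (-1) ^ n = Ring.choose (a - 1) N * (-1) ^ N := by
  induction N with
  | zero => simp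
  | succ N ih =>
    have pascal := Ring.choose_succ_succ (a - 1) N
    rw [sub_add_cancel] at pascal
    rw [sum_range_succ, ih, pascal, pow_succ]
    ring

theorem Real.hasSum_choose_mul_pow {a y : ℝ} (hy : |y| < 1) :
    HasSum (fun n => Ring.choose a n * y ^ n) ((1 + y) ^ a) := by
  have hy' : y ∈ Metric.eball (0 : ℝ) 1 := by
    rw [Metric.mem_eball, edist_zero_right, enorm_eq_nnnorm]
    exact_mod_cast (show ‖y‖ < 1 from hy)
  simpa [binomialSeries, FormalMultilinearSeries.ofScalars_apply_eq, mul_comm] using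
    Real.one_add_rpow_hasFPowerSeriesOnBall_zero.hasSum hy'

theorem abs_choose_one_half_succ_le (N : ℕ) :
    |Ring.choose (1 / 2 : ℝ) (N + 1)| ≤ 1 / (2 * (N + 1)) := by
  induction N with
  | zero => norm_num [Ring.choose_one_right]
  | succ N ih =>
    have step : |Ring.choose (1 / 2 : ℝ) (N + 2)| * (N + 2) =
        |Ring.choose (1 / 2 : ℝ) (N + 1)| * (N + 1 / 2) := by
      have h := Ring.choose_succ_right_eq (1 / 2 : ℝ) (N + 1)
      push_cast at h
      have h' : Ring.choose (1 / 2 : ℝ) (N + 2) * (N + 2) =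
          -(Ring.choose (1 / 2 : ℝ) (N + 1) * (N + 1 / 2)) := by linear_combination h
      rw [← abs_of_pos (by positivity : (0 : ℝ) < N + 2),
        ← abs_of_pos (by positivity : (0 : ℝ) < N + 1 / 2), ← abs_mul, ← abs_mul, h', abs_neg]
    rw [le_div_iff₀ (by positivity)] at ih ⊢
    push_cast
    nlinarith [abs_nonneg (Ring.choose (1 / 2 : ℝ) (N + 1))]

theorem choose_three_halves_mul_neg_two_pow (m : ℕ) :
    Ring.choose (3 / 2 : ℝ) (m + 2) * (-2) ^ (m + 2) = 3 * (2 * m - 1)‼ / (m + 2)! := by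
  induction m with
  | zero =>
    have h := Ring.choose_succ_right_eq (3 / 2 : ℝ) 1
    rw [Ring.choose_one_right] at h
    norm_num at h ⊢
    linarith
  | succ m ih =>
    have step := Ring.choose_succ_right_eq (3 / 2 : ℝ) (m + 2)
    rw [show 2 * (m + 1) - 1 = 2 * m + 1 by omega, Nat.doubleFactorial_add_one,
      show m + 1 + 2 = m + 2 + 1 by ring, Nat.factorial_succ]
    rw [eq_div_iff (by positivity)] at ih ⊢
    push_cast at ih step ⊢
    linear_combination (-2) ^ (m + 2) * (-2) * ((m + 2)! : ℝ) * step + (2 * m + 1 : ℝ) * ih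

theorem hasSum_choose_three_halves_mul_neg_one_pow :
    HasSum (fun n => Ring.choose (3 / 2 : ℝ) n * (-1) ^ n) 0 := by
  set f := fun n => Ring.choose (3 / 2 : ℝ) n * (-1) ^ n
  have partial_sum (N : ℕ) :
      ∑ n ∈ range (N + 2), f n = Ring.choose (1 / 2 : ℝ) (N + 1) * (-1) ^ (N + 1) := by
    rw [Ring.sum_range_succ_choose_mul_neg_one_pow]
    norm_num
  have tail_nonneg (m : ℕ) : 0 ≤ f (m + 2) := by
    have : f (m + 2) = Ring.choose (3 / 2 : ℝ) (m + 2) * (-2) ^ (m + 2) / 2 ^ (m + 2) := by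
      simp only [f, show (-2 : ℝ) = -1 * 2 by norm_num, mul_pow]
      field_simp
    rw [this, choose_three_halves_mul_neg_two_pow]
    positivity
  have partial_sum_tendsto : Tendsto (fun N => ∑ n ∈ range (N + 2), f n) atTop (𝓝 0) := by
    refine squeeze_zero_norm (fun N => ?_) tendsto_one_div_add_atTop_nhds_zero_nat
    rw [partial_sum, norm_mul, norm_pow, norm_neg, norm_one, one_pow, mul_one, Real.norm_eq_abs]
    refine (abs_choose_one_half_succ_le N).trans ?_
    gcongr
    linarith
  rw [← hasSum_nat_add_iff' 2, zero_sub, hasSum_iff_tendsto_nat_of_nonneg tail_nonneg]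
  convert partial_sum_tendsto.sub_const (∑ i ∈ range 2, f i) using 2 with N
  · rw [add_comm N, sum_range_add]
    simp only [add_comm 2]
    ring
  · simp

theorem hasSum_choose_three_halves_mul_neg_pow {u : ℝ} (h0 : 0 ≤ u) (h1 : u ≤ 1) :
    HasSum (fun n => Ring.choose (3 / 2 : ℝ) n * (-u) ^ n) ((1 - u) ^ (3 / 2 : ℝ)) := by
  rcases h1.lt_or_eq with h1 | rfl
  · rw [sub_eq_add_neg]
    exact Real.hasSum_choose_mul_pow (by rw [abs_neg, abs_of_nonneg h0]; exact h1)
  · rw [sub_self, Real.zero_rpow (by norm_num)]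
    exact hasSum_choose_three_halves_mul_neg_one_pow

theorem Zfun_succ (p : ℕ) :
    Zfun (p + 1) = (if p = 0 then 1 / 2 else 0) +
      Ring.choose (3 / 2 : ℝ) (p + 1) * (-12) ^ (p + 1) / (24 * √3) := by
  have hs : √3 ^ 2 = 3 := Real.sq_sqrt (by norm_num)
  rcases p with _ | m
  · norm_num [Zfun, Ring.choose_one_right]
    field_simp
    linear_combination -48 * hs
  · have hZ : Zfun (m + 2) = 6 ^ (m + 2) * (2 * m - 1)‼ / (8 * √3 * (m + 2)!) := by
      simp only [Zfun, if_neg (show m + 2 ≠ 1 by omega),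
        show 2 * (m + 2) - 5 = 2 * m - 1 by omega]
    rw [hZ, if_neg m.succ_ne_zero, show (-12 : ℝ) = 6 * -2 by norm_num, mul_pow, zero_add,
      mul_left_comm, choose_three_halves_mul_neg_two_pow]
    field_simp
    ring

/-- Generating function: `Σ_{p≥0} Z(p+1) x^p = 1/2 + ((1-12x)^{3/2}-1)/(24√3 x)` for
`x ∈ (0, 1/12]`. -/
theorem Z_generating_function (x : ℝ) (hx : x ∈ Set.Ioc (0 : ℝ) (1 / 12)) :
    Summable (fun p : ℕ => Zfun (p + 1) * x ^ p) ∧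
    ∑' p : ℕ, Zfun (p + 1) * x ^ p =
      1 / 2 + ((1 - 12 * x) ^ ((3 : ℝ) / 2) - 1) / (24 * Real.sqrt 3 * x) := by
  obtain ⟨hx0, hx12⟩ := hx
  have binomial :=
    hasSum_choose_three_halves_mul_neg_pow (u := 12 * x) (by positivity) (by linarith)
  have shifted : HasSum (fun p => Ring.choose (3 / 2 : ℝ) (p + 1) * (-(12 * x)) ^ (p + 1))
      ((1 - 12 * x) ^ (3 / 2 : ℝ) - 1) := by
    simpa using (hasSum_nat_add_iff' 1).mpr binomial
  have series := (hasSum_ite_eq 0 (1 / 2 : ℝ)).add (shifted.div_const (24 * √3 * x))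
  have terms : (fun p : ℕ => Zfun (p + 1) * x ^ p) = fun p =>
      (if p = 0 then 1 / 2 else 0) +
        Ring.choose (3 / 2 : ℝ) (p + 1) * (-(12 * x)) ^ (p + 1) / (24 * √3 * x) := by
    funext p
    rw [Zfun_succ, add_mul, ite_mul, zero_mul, neg_mul_eq_neg_mul, mul_pow]
    split_ifs with hp
    · subst hp
      field_simp
      ring
    · field_simp
      ring
  rw [terms]
  exact ⟨series.summable, series.tsum_eq⟩
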